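/- arXiv:2102.04092 — 4 statements merged into one kernel-verified Lean document; each statement's English description precedes it below -/
import Mathlib

section
/- Let d(x) = α + β·x^p with α > 0, β ≥ 0, p ≥ 1. Then there exists a > 0 such that for all x, y ≥ 0 with |x − y| ≤ a and x ≠ y, one has a ≤ |x − y|·max(d(x), d(y)) / |d(x) − d(y)|. -/
/-!
Since `x ↦ x ^ p` is convex, `x ^ p - y ^ p ≤ p x ^ (p - 1) (x - y)` for `0 ≤ y ≤ x`, and
`x ^ (p - 1) ≤ 1 + x ^ p`. Hence the increment `d x - d y = β (x ^ p - y ^ p)` is at most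
`(x - y) β p (1 + x ^ p)`, and with `a = α / (p (α + β))` the factor `a β p = αβ / (α + β)` is at
most both `α` and `β`, so `a (d x - d y) ≤ (x - y) d x`.
-/

open Real

lemma rpow_sub_rpow_le_mul_rpow_sub_one_mul {p x y : ℝ} (hp : 1 ≤ p) (hy : 0 ≤ y)
    (hyx : y ≤ x) : x ^ p - y ^ p ≤ p * x ^ (p - 1) * (x - y) := by
  rcases hyx.eq_or_lt with rfl | hyx
  · simp
  have hslope := (convexOn_rpow hp).slope_le_of_hasDerivAt hy (hy.trans hyx.le) hyx
    (hasDerivAt_rpow_const (Or.inr hp))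
  rwa [slope_def_field, div_le_iff₀ (sub_pos.2 hyx)] at hslope

lemma rpow_sub_one_le_one_add_rpow {p x : ℝ} (hp : 1 ≤ p) (hx : 0 ≤ x) :
    x ^ (p - 1) ≤ 1 + x ^ p := by
  rcases le_total x 1 with hx1 | hx1
  · have := rpow_le_one hx hx1 (sub_nonneg.2 hp)
    have := rpow_nonneg hx p
    linarith
  · have := rpow_le_rpow_of_exponent_le hx1 (sub_le_self p zero_le_one)
    linarith

lemma add_mul_rpow_sub_mul_le {α β p x y : ℝ} (hα : 0 < α) (hβ : 0 ≤ β) (hp : 1 ≤ p)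
    (hy : 0 ≤ y) (hyx : y ≤ x) :
    (α + β * x ^ p - (α + β * y ^ p)) * (α / (p * (α + β))) ≤ (x - y) * (α + β * x ^ p) := by
  have hp0 : 0 < p := by linarith
  have hαβ : 0 < α + β := by linarith
  set c := α * β / (α + β) with hc_def
  have hcα : c ≤ α := div_le_of_le_mul₀ hαβ.le hα.le (by nlinarith)
  have hcβ : c ≤ β := div_le_of_le_mul₀ hαβ.le hβ (by nlinarith)
  have hc : α / (p * (α + β)) * (β * p) = c := by rw [hc_def]; field_simp
  have hxp := rpow_nonneg (hy.trans hyx) p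
  have hderiv : c * x ^ (p - 1) ≤ α + β * x ^ p := calc
    c * x ^ (p - 1) ≤ c * (1 + x ^ p) :=
      mul_le_mul_of_nonneg_left (rpow_sub_one_le_one_add_rpow hp (hy.trans hyx)) (by positivity)
    _ ≤ α + β * x ^ p := by nlinarith
  have hmvt := rpow_sub_rpow_le_mul_rpow_sub_one_mul hp hy hyx
  calc (α + β * x ^ p - (α + β * y ^ p)) * (α / (p * (α + β)))
      = β * (x ^ p - y ^ p) * (α / (p * (α + β))) := by ring
    _ ≤ β * (p * x ^ (p - 1) * (x - y)) * (α / (p * (α + β))) := by gcongr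
    _ = (x - y) * (c * x ^ (p - 1)) := by rw [← hc]; ring
    _ ≤ (x - y) * (α + β * x ^ p) := by gcongr

theorem stmt_0 (α β p : ℝ) (hα : 0 < α) (hβ : 0 ≤ β) (hp : 1 ≤ p)
    (d : ℝ → ℝ) (hd : ∀ x, 0 ≤ x → d x = α + β * x ^ p) :
    ∃ a > 0, ∀ x y : ℝ, 0 ≤ x → 0 ≤ y → |x - y| ≤ a → x ≠ y →
      |d x - d y| * a ≤ |x - y| * max (d x) (d y) := by
  refine ⟨α / (p * (α + β)), by positivity, ?_⟩
  rintro x y hx hy - hne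
  wlog hyx : y < x generalizing x y
  · have := this y x hy hx hne.symm (hne.lt_or_gt.resolve_right hyx)
    rwa [abs_sub_comm, abs_sub_comm y, max_comm] at this
  have hmono : d y ≤ d x := by
    rw [hd x hx, hd y hy]
    gcongr
  rw [abs_of_nonneg (sub_nonneg.2 hmono), abs_of_pos (sub_pos.2 hyx), max_eq_left hmono,
    hd x hx, hd y hy]
  exact add_mul_rpow_sub_mul_le hα hβ hp hy hyx.le
end

section
/- Let a > 0 and let d : [0,∞) → [0,∞) satisfy: for all x, y with |x − y| ≤ a, |d(x) − d(y)|·a ≤ |x − y|·max(d(x), d(y)). Let b be a probability measure on [0,∞) and ρ(x,y) = min(a, |x−y|). Then for all x, y ≥ 0 with max(d(x),d(y)) > 0, I(x,y) := ((d(x)−d(y))₊/max(d(x),d(y)))·∫ρ(z,y) db(z) + ((d(y)−d(x))₊/max(d(x),d(y)))·∫ρ(x,z) db(z) ≤ ρ(x,y). -/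
/-!
Since `ρ ≤ a`, each integral is at most `a`, and the two positive parts add up to `|d x - d y|`,
so the left-hand side is at most `|d x - d y| / max (d x) (d y) * a`. This is at most `a` because
`d ≥ 0`, and at most `|x - y|` by the hypothesis on `d` when `|x - y| ≤ a`; otherwise `ρ(x, y) = a`.
-/

open MeasureTheory

theorem integral_le_of_norm_le_const {α : Type*} [MeasurableSpace α] {μ : Measure α}
    [IsProbabilityMeasure μ] {f : α → ℝ} {C : ℝ} (h : ∀ᵐ x ∂μ, ‖f x‖ ≤ C) :
    ∫ x, f x ∂μ ≤ C :=
  (le_abs_self _).trans <| by simpa using norm_integral_le_of_norm_le_const h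

theorem integral_min_le {α : Type*} [MeasurableSpace α] (μ : Measure α) [IsProbabilityMeasure μ]
    {a : ℝ} (ha : 0 ≤ a) (f : α → ℝ) : ∫ z, min a |f z| ∂μ ≤ a :=
  integral_le_of_norm_le_const <| ae_of_all _ fun z => by
    rw [Real.norm_of_nonneg (le_min ha (abs_nonneg _))]
    exact min_le_left _ _

theorem max_sub_zero_add_max_sub_zero (p q : ℝ) : max (p - q) 0 + max (q - p) 0 = |p - q| := by
  rcases le_total p q with h | h
  · rw [max_eq_right (by linarith), max_eq_left (by linarith), abs_of_nonpos (by linarith)]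
    ring
  · rw [max_eq_left (by linarith), max_eq_right (by linarith), abs_of_nonneg (by linarith)]
    ring

theorem abs_sub_le_max_of_nonneg {p q : ℝ} (hp : 0 ≤ p) (hq : 0 ≤ q) : |p - q| ≤ max p q :=
  abs_sub_le_iff.2 ⟨by linarith [le_max_left p q], by linarith [le_max_right p q]⟩

theorem abs_sub_div_max_mul_le_min {a p q r : ℝ} (ha : 0 ≤ a) (hp : 0 ≤ p) (hq : 0 ≤ q)
    (hpq : 0 < max p q) (h : r ≤ a → |p - q| * a ≤ r * max p q) :
    |p - q| / max p q * a ≤ min a r := by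
  have hle_a : |p - q| / max p q * a ≤ a :=
    mul_le_of_le_one_left ha ((div_le_one hpq).2 (abs_sub_le_max_of_nonneg hp hq))
  refine le_min hle_a ?_
  rcases le_total r a with hra | har
  · rw [div_mul_eq_mul_div, div_le_iff₀ hpq]
    exact h hra
  · exact hle_a.trans har

theorem stmt_4_general (a : ℝ) (ha : 0 < a) (d : ℝ → ℝ) (hd : ∀ x, 0 ≤ x → 0 ≤ d x)
    (hcond : ∀ x y : ℝ, 0 ≤ x → 0 ≤ y → |x - y| ≤ a →
      |d x - d y| * a ≤ |x - y| * max (d x) (d y))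
    (b : Measure ℝ) [IsProbabilityMeasure b] :
    ∀ x y : ℝ, 0 ≤ x → 0 ≤ y → 0 < max (d x) (d y) →
      (max (d x - d y) 0 / max (d x) (d y)) * (∫ z, min a |z - y| ∂b) +
        (max (d y - d x) 0 / max (d x) (d y)) * (∫ z, min a |x - z| ∂b)
        ≤ min a |x - y| := by
  intro x y hx hy hpos
  calc (max (d x - d y) 0 / max (d x) (d y)) * (∫ z, min a |z - y| ∂b) +
        (max (d y - d x) 0 / max (d x) (d y)) * (∫ z, min a |x - z| ∂b)
      ≤ (max (d x - d y) 0 / max (d x) (d y)) * a +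
        (max (d y - d x) 0 / max (d x) (d y)) * a := by
        gcongr <;> exact integral_min_le b ha.le _
    _ = |d x - d y| / max (d x) (d y) * a := by
        rw [← add_mul, ← add_div, max_sub_zero_add_max_sub_zero]
    _ ≤ min a |x - y| :=
        abs_sub_div_max_mul_le_min ha.le (hd x hx) (hd y hy) hpos (hcond x y hx hy)

theorem stmt_4 (a : ℝ) (ha : 0 < a) (d : ℝ → ℝ) (hd : ∀ x, 0 ≤ x → 0 ≤ d x)
    (hcond : ∀ x y : ℝ, 0 ≤ x → 0 ≤ y → |x - y| ≤ a →
      |d x - d y| * a ≤ |x - y| * max (d x) (d y))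
    (b : Measure ℝ) [IsProbabilityMeasure b] (hb : b (Set.Ici 0) = 1) :
    ∀ x y : ℝ, 0 ≤ x → 0 ≤ y → 0 < max (d x) (d y) →
      (max (d x - d y) 0 / max (d x) (d y)) * (∫ z, min a |z - y| ∂b) +
        (max (d y - d x) 0 / max (d x) (d y)) * (∫ z, min a |x - z| ∂b)
        ≤ min a |x - y| :=
  stmt_4_general a ha d hd hcond b
end

section
/- Let d : [0,∞) → [0,∞) and a > 0 satisfy: for all x, y with |x−y| ≤ a, |d(x)−d(y)|·a ≤ |x−y|·max(d(x),d(y)). Define on J = [0,∞) × ℝ^d the cost ϱ(x,z,y,r) = min(a, |x−y| + |z−r|). Then for all (x,z), (y,r) ∈ J, assuming without loss of generality d(x) ≥ d(y), the quantity Δ(x,z,y,r) := −d(x)·min(|x−y|+|z−r|, a) + d(y)·min(|z−r|, a) + (d(x)−d(y))·a is ≤ 0. -/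
/-- If `s + t ≥ a` the left side is `B * (min t a - a)`; otherwise it is at most `-(A - B) * t`
once `(A - B) * a` is bounded by `s * A`. -/
theorem neg_mul_min_add_mul_min_add_sub_mul_nonpos {a s t A B : ℝ} (hs : 0 ≤ s) (ht : 0 ≤ t)
    (hB : 0 ≤ B) (hBA : B ≤ A) (hlip : s ≤ a → (A - B) * a ≤ s * A) :
    -(A * min (s + t) a) + B * min t a + (A - B) * a ≤ 0 := by
  rcases le_or_gt a (s + t) with hfar | hnear
  · rw [min_eq_right hfar]
    linarith [mul_le_mul_of_nonneg_left (min_le_right t a) hB]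
  · rw [min_eq_left hnear.le, min_eq_left (by linarith)]
    linarith [hlip (by linarith), mul_nonneg (sub_nonneg.mpr hBA) ht]

theorem stmt_8_general (a : ℝ) (n : ℕ)
    (d : ℝ → ℝ) (hd : ∀ x, 0 ≤ x → 0 ≤ d x)
    (hcond : ∀ x y : ℝ, 0 ≤ x → 0 ≤ y → |x - y| ≤ a →
      |d x - d y| * a ≤ |x - y| * max (d x) (d y)) :
    ∀ (x y : ℝ) (z r : EuclideanSpace ℝ (Fin n)), 0 ≤ x → 0 ≤ y →
      d y ≤ d x →
      -(d x * min (|x - y| + ‖z - r‖) a) + d y * min ‖z - r‖ a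
        + (d x - d y) * a ≤ 0 := by
  intro x y z r hx hy hdxy
  refine neg_mul_min_add_mul_min_add_sub_mul_nonpos (abs_nonneg _) (norm_nonneg _) (hd y hy) hdxy
    fun hxy => ?_
  simpa only [abs_of_nonneg (sub_nonneg.mpr hdxy), max_eq_left hdxy] using hcond x y hx hy hxy

theorem stmt_8 (a : ℝ) (ha : 0 < a) (n : ℕ)
    (d : ℝ → ℝ) (hd : ∀ x, 0 ≤ x → 0 ≤ d x)
    (hcond : ∀ x y : ℝ, 0 ≤ x → 0 ≤ y → |x - y| ≤ a →
      |d x - d y| * a ≤ |x - y| * max (d x) (d y)) :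
    ∀ (x y : ℝ) (z r : EuclideanSpace ℝ (Fin n)), 0 ≤ x → 0 ≤ y →
      d y ≤ d x →
      -(d x * min (|x - y| + ‖z - r‖) a) + d y * min ‖z - r‖ a
        + (d x - d y) * a ≤ 0 :=
  stmt_8_general a n d hd hcond
end

section
/- Let β be a probability measure on [0,1] with m := ∫₀¹ r dβ(r) < 1, let a > 0, and let d : [0,∞) → [0,∞) satisfy: a·|d(x)−d(y)| ≤ (1−m)·|x−y|·max(d(x),d(y)) whenever |x−y| ≤ a. Set ϱ(x,y) = min(a,|x−y|). Then for all x, y ≥ 0, Δ(x,y) := −max(d(x),d(y))·ϱ(x,y) + min(d(x),d(y))·∫₀¹ ϱ(rx,ry) dβ(r) + (d(x)−d(y))₊·∫₀¹ ϱ(rx,y) dβ(r) + (d(y)−d(x))₊·∫₀¹ ϱ(x,ry) dβ(r) ≤ 0. -/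
/-!
Assume `d y ≤ d x` (the other case is symmetric) and write `s = |x - y|`. Since `ϱ ≤ a` and
`ϱ(rx, ry) ≤ r s`, we have `∫ ϱ(rx, ry) dβ ≤ min a (m s)` and `∫ ϱ(rx, y) dβ ≤ a`.
If `a ≤ s` the three terms cancel against these bounds. If `s ≤ a`, the defect is at most
`-d x · s + d y · m s + (d x - d y) · a`, and the hypothesis on `d` bounds `(d x - d y) · a` by
`(1 - m) s · d x`, leaving `m s (d y - d x) ≤ 0`.
-/

open MeasureTheory Set

lemma neg_mul_min_add_le_zero_of_le {a s m A B I J : ℝ} (hBA : B ≤ A) (hB : 0 ≤ B)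
    (hs : 0 ≤ s) (hm : 0 ≤ m) (hIa : I ≤ a) (hIs : I ≤ m * s) (hJ : J ≤ a)
    (hcond : s ≤ a → a * (A - B) ≤ (1 - m) * (s * A)) :
    -(A * min a s) + B * I + (A - B) * J ≤ 0 := by
  have hJ' : (A - B) * J ≤ (A - B) * a := mul_le_mul_of_nonneg_left hJ (sub_nonneg.2 hBA)
  rcases le_total a s with has | hsa
  · rw [min_eq_left has]
    nlinarith [mul_le_mul_of_nonneg_left hIa hB]
  · rw [min_eq_right hsa]
    nlinarith [mul_le_mul_of_nonneg_left hIs hB, hcond hsa, mul_nonneg hm hs]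

lemma neg_max_mul_min_add_le_zero {a s m A B I J K : ℝ} (hA : 0 ≤ A) (hB : 0 ≤ B)
    (hs : 0 ≤ s) (hm : 0 ≤ m) (hIa : I ≤ a) (hIs : I ≤ m * s) (hJ : J ≤ a) (hK : K ≤ a)
    (hcond : s ≤ a → a * |A - B| ≤ (1 - m) * (s * max A B)) :
    -(max A B * min a s) + min A B * I + max (A - B) 0 * J + max (B - A) 0 * K ≤ 0 := by
  rcases le_total B A with hBA | hAB
  · have h := neg_mul_min_add_le_zero_of_le hBA hB hs hm hIa hIs hJ fun hsa => by
      simpa [abs_of_nonneg (sub_nonneg.2 hBA), max_eq_left hBA] using hcond hsa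
    rw [max_eq_left hBA, min_eq_right hBA, max_eq_left (sub_nonneg.2 hBA),
      max_eq_right (sub_nonpos.2 hBA), zero_mul, add_zero]
    exact h
  · have h := neg_mul_min_add_le_zero_of_le hAB hA hs hm hIa hIs hK fun hsa => by
      simpa [abs_of_nonpos (sub_nonpos.2 hAB), max_eq_right hAB] using hcond hsa
    rw [max_eq_right hAB, min_eq_left hAB, max_eq_right (sub_nonpos.2 hAB),
      max_eq_left (sub_nonneg.2 hAB), zero_mul, add_zero]
    linarith

lemma integral_min_le_of_nonneg {α : Type*} [MeasurableSpace α] {μ : Measure α}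
    [IsProbabilityMeasure μ] {a : ℝ} (ha : 0 ≤ a) {g : α → ℝ} (hg : ∀ x, 0 ≤ g x) :
    ∫ x, min a (g x) ∂μ ≤ a :=
  calc ∫ x, min a (g x) ∂μ ≤ ‖∫ x, min a (g x) ∂μ‖ := Real.le_norm_self _
    _ ≤ a * μ.real univ := norm_integral_le_of_norm_le_const <| ae_of_all _ fun x => by
        rw [Real.norm_of_nonneg (le_min ha (hg x))]
        exact min_le_left _ _
    _ = a := by simp

lemma integrable_id_of_ae_mem_Icc {μ : Measure ℝ} [IsFiniteMeasure μ]
    (h01 : ∀ᵐ r ∂μ, r ∈ Icc (0 : ℝ) 1) :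
    Integrable (fun r : ℝ => r) μ :=
  Integrable.of_bound aestronglyMeasurable_id 1 <| h01.mono fun r hr => by
    rw [Real.norm_eq_abs, abs_le]
    exact ⟨by linarith [hr.1], hr.2⟩

lemma integral_min_abs_mul_sub_mul_le {μ : Measure ℝ} [IsFiniteMeasure μ]
    (h01 : ∀ᵐ r ∂μ, r ∈ Icc (0 : ℝ) 1) {a : ℝ} (ha : 0 ≤ a) (x y : ℝ) :
    ∫ r, min a |r * x - r * y| ∂μ ≤ (∫ r, r ∂μ) * |x - y| := by
  rw [← integral_mul_const]
  refine integral_mono_of_nonneg (ae_of_all _ fun r => le_min ha (abs_nonneg _))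
    ((integrable_id_of_ae_mem_Icc h01).mul_const _) (h01.mono fun r hr => ?_)
  calc min a |r * x - r * y| ≤ |r * (x - y)| := by rw [mul_sub]; exact min_le_right _ _
    _ = r * |x - y| := by rw [abs_mul, abs_of_nonneg hr.1]

theorem stmt_11_general (β : Measure ℝ) [IsProbabilityMeasure β] (hβ : β (Set.Icc 0 1) = 1)
    (m : ℝ) (hm : m = ∫ r, r ∂β)
    (a : ℝ) (ha : 0 < a) (d : ℝ → ℝ) (hd : ∀ x, 0 ≤ x → 0 ≤ d x)
    (hcond : ∀ x y : ℝ, 0 ≤ x → 0 ≤ y → |x - y| ≤ a →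
      a * |d x - d y| ≤ (1 - m) * (|x - y| * max (d x) (d y))) :
    ∀ x y : ℝ, 0 ≤ x → 0 ≤ y →
      -(max (d x) (d y) * min a |x - y|)
        + min (d x) (d y) * (∫ r, min a |r * x - r * y| ∂β)
        + max (d x - d y) 0 * (∫ r, min a |r * x - y| ∂β)
        + max (d y - d x) 0 * (∫ r, min a |x - r * y| ∂β) ≤ 0 := by
  intro x y hx hy
  have h01 : ∀ᵐ r ∂β, r ∈ Icc (0 : ℝ) 1 :=
    (ae_mem_iff_measure_eq measurableSet_Icc.nullMeasurableSet).2 (by rw [hβ, measure_univ])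
  have hm0 : 0 ≤ m := hm ▸ integral_nonneg_of_ae (h01.mono fun r hr => hr.1)
  exact neg_max_mul_min_add_le_zero (hd x hx) (hd y hy) (abs_nonneg _) hm0
    (integral_min_le_of_nonneg ha.le fun _ => abs_nonneg _)
    (hm ▸ integral_min_abs_mul_sub_mul_le h01 ha.le x y)
    (integral_min_le_of_nonneg ha.le fun _ => abs_nonneg _)
    (integral_min_le_of_nonneg ha.le fun _ => abs_nonneg _) (hcond x y hx hy)

theorem stmt_11 (β : Measure ℝ) [IsProbabilityMeasure β] (hβ : β (Set.Icc 0 1) = 1)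
    (m : ℝ) (hm : m = ∫ r, r ∂β) (hm1 : m < 1)
    (a : ℝ) (ha : 0 < a) (d : ℝ → ℝ) (hd : ∀ x, 0 ≤ x → 0 ≤ d x)
    (hcond : ∀ x y : ℝ, 0 ≤ x → 0 ≤ y → |x - y| ≤ a →
      a * |d x - d y| ≤ (1 - m) * (|x - y| * max (d x) (d y))) :
    ∀ x y : ℝ, 0 ≤ x → 0 ≤ y →
      -(max (d x) (d y) * min a |x - y|)
        + min (d x) (d y) * (∫ r, min a |r * x - r * y| ∂β)
        + max (d x - d y) 0 * (∫ r, min a |r * x - y| ∂β)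
        + max (d y - d x) 0 * (∫ r, min a |x - r * y| ∂β) ≤ 0 :=
  stmt_11_general β hβ m hm a ha d hd hcond
end
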